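/- arXiv:2604.06837 — 2 statements merged into one kernel-verified Lean document; each statement's English description precedes it below -/
import Mathlib

section
/- Let F : ℝ^n → ℝ^n be κ-Lipschitz in a norm ‖·‖ with κ < 1 and fixed point Q*. Let Q_θ range over an arbitrary nonempty set S ⊆ ℝ^n, and suppose Q̂ ∈ S minimizes the residual ‖F(Q) − Q‖ over S. Then ‖Q̂ − Q*‖ ≤ ((1+κ)/(1−κ)) · inf_{Q ∈ S} ‖Q − Q*‖. -/
/-! A fixed point `x₀` of a `κ`-contraction controls the residual `dist (F x) x` from both sides:
`(1 - κ) dist x x₀ ≤ dist (F x) x ≤ (1 + κ) dist x x₀`. Minimizing the residual over `S` therefore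
minimizes the distance to `x₀` up to the factor `(1 + κ) / (1 - κ)`. -/

open Function

section Contraction

variable {X : Type*} [PseudoMetricSpace X] {κ : ℝ} {F : X → X} {x₀ : X}

theorem dist_apply_self_le_of_isFixedPt (hF : ∀ x y, dist (F x) (F y) ≤ κ * dist x y)
    (hfix : IsFixedPt F x₀) (x : X) : dist (F x) x ≤ (1 + κ) * dist x x₀ := by
  have hcontract : dist (F x) x₀ ≤ κ * dist x x₀ := by simpa only [hfix.eq] using hF x x₀
  calc dist (F x) x ≤ dist (F x) x₀ + dist x₀ x := dist_triangle _ _ _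
    _ ≤ (1 + κ) * dist x x₀ := by rw [dist_comm x₀]; linarith

theorem sub_mul_dist_le_dist_apply_self_of_isFixedPt
    (hF : ∀ x y, dist (F x) (F y) ≤ κ * dist x y) (hfix : IsFixedPt F x₀) (x : X) :
    (1 - κ) * dist x x₀ ≤ dist (F x) x := by
  have hcontract : dist (F x) x₀ ≤ κ * dist x x₀ := by simpa only [hfix.eq] using hF x x₀
  calc (1 - κ) * dist x x₀ ≤ dist x (F x) + dist (F x) x₀ - κ * dist x x₀ := by
        linarith [dist_triangle x (F x) x₀]
    _ ≤ dist (F x) x := by rw [dist_comm x]; linarith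

theorem dist_le_of_isMinOn_dist_apply_self (hF : ∀ x y, dist (F x) (F y) ≤ κ * dist x y)
    (hfix : IsFixedPt F x₀) (hκ : κ < 1) {S : Set X} {x y : X}
    (hmin : IsMinOn (fun z => dist (F z) z) S x) (hy : y ∈ S) :
    dist x x₀ ≤ (1 + κ) / (1 - κ) * dist y x₀ := by
  rw [div_mul_eq_mul_div, le_div_iff₀ (sub_pos.2 hκ), mul_comm]
  calc (1 - κ) * dist x x₀ ≤ dist (F x) x := sub_mul_dist_le_dist_apply_self_of_isFixedPt hF hfix x
    _ ≤ dist (F y) y := isMinOn_iff.1 hmin y hy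
    _ ≤ (1 + κ) * dist y x₀ := dist_apply_self_le_of_isFixedPt hF hfix y

end Contraction

theorem quasi_optimality_general {E : Type*} [NormedAddCommGroup E]
    (κ : ℝ) (hκ : 0 ≤ κ ∧ κ < 1)
    (F : E → E) (hF : ∀ x y : E, ‖F x - F y‖ ≤ κ * ‖x - y‖)
    (Qstar : E) (hfix : F Qstar = Qstar)
    (S : Set E)
    (Qhat : E) (hQhat : Qhat ∈ S)
    (hmin : ∀ Q ∈ S, ‖F Qhat - Qhat‖ ≤ ‖F Q - Q‖) :
    ‖Qhat - Qstar‖ ≤ (1 + κ) / (1 - κ) * ⨅ Q : S, ‖(Q : E) - Qstar‖ := by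
  have hdist : ∀ x y, dist (F x) (F y) ≤ κ * dist x y := by simpa only [dist_eq_norm] using hF
  have hmin' : IsMinOn (fun z => dist (F z) z) S Qhat :=
    isMinOn_iff.2 (by simpa only [dist_eq_norm] using hmin)
  have : Nonempty S := ⟨⟨Qhat, hQhat⟩⟩
  rw [Real.mul_iInf_of_nonneg (div_nonneg (by linarith) (by linarith))]
  refine le_ciInf fun Q => ?_
  simpa only [dist_eq_norm] using
    dist_le_of_isMinOn_dist_apply_self hdist hfix hκ.2 hmin' Q.2

theorem quasi_optimality {E : Type*} [NormedAddCommGroup E]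
    (κ : ℝ) (hκ : 0 ≤ κ ∧ κ < 1)
    (F : E → E) (hF : ∀ x y : E, ‖F x - F y‖ ≤ κ * ‖x - y‖)
    (Qstar : E) (hfix : F Qstar = Qstar)
    (S : Set E) (hS : S.Nonempty)
    (Qhat : E) (hQhat : Qhat ∈ S)
    (hmin : ∀ Q ∈ S, ‖F Qhat - Qhat‖ ≤ ‖F Q - Q‖) :
    ‖Qhat - Qstar‖ ≤ (1 + κ) / (1 - κ) * ⨅ Q : S, ‖(Q : E) - Qstar‖ :=
  quasi_optimality_general κ hκ F hF Qstar hfix S Qhat hQhat hmin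
end

section
/- Let F : ℝ^n → ℝ^n be defined componentwise by (F Q)_k = R_k + γ ∑_{k'} P_{k,k'} · λ ln(∑_{j} exp(Q_{k',j}/λ)), where each row of P is a probability distribution, λ > 0, and γ ∈ [0,1) — interpreting Q ∈ ℝ^{S×A} indexed by state-action pairs. Then F is a γ-contraction in the sup norm: ‖F Q − F Q'‖_∞ ≤ γ ‖Q − Q'‖_∞. -/
/-!
The soft maximum `x ↦ λ log ∑ exp (x u / λ)` is monotone and commutes with adding a constant,
hence is 1-Lipschitz for the sup norm. Averaging over next states with a probability row of `P`
preserves this bound, and the discount `γ` scales it, so `F` is a `γ`-contraction.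
-/

open Finset Real

noncomputable def softMax {A : Type*} [Fintype A] (lam : ℝ) (x : A → ℝ) : ℝ :=
  lam * log (∑ u, exp (x u / lam))

section softMax

variable {A : Type*} [Fintype A] [Nonempty A] {lam : ℝ}

lemma softMax_mono (hlam : 0 < lam) {x y : A → ℝ} (hxy : ∀ u, x u ≤ y u) :
    softMax lam x ≤ softMax lam y := by
  have hsum : ∑ u, exp (x u / lam) ≤ ∑ u, exp (y u / lam) :=
    sum_le_sum fun u _ => exp_le_exp.mpr (div_le_div_of_nonneg_right (hxy u) hlam.le)
  exact mul_le_mul_of_nonneg_left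
    (log_le_log (sum_pos (fun u _ => exp_pos _) univ_nonempty) hsum) hlam.le

lemma softMax_add_const (hlam : 0 < lam) (x : A → ℝ) (c : ℝ) :
    softMax lam (fun u => x u + c) = softMax lam x + c := by
  have hsum : ∑ u, exp ((x u + c) / lam) = exp (c / lam) * ∑ u, exp (x u / lam) := by
    rw [mul_sum]
    exact sum_congr rfl fun u _ => by rw [← exp_add, add_div, add_comm]
  have hpos : 0 < ∑ u, exp (x u / lam) := sum_pos (fun u _ => exp_pos _) univ_nonempty
  rw [softMax, softMax, hsum, log_mul (exp_ne_zero _) hpos.ne', log_exp]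
  field_simp
  ring

lemma softMax_le_add (hlam : 0 < lam) {x y : A → ℝ} {M : ℝ} (h : ∀ u, x u ≤ y u + M) :
    softMax lam x ≤ softMax lam y + M :=
  softMax_add_const hlam y M ▸ softMax_mono hlam h

lemma abs_softMax_sub_le (hlam : 0 < lam) {x y : A → ℝ} {M : ℝ} (h : ∀ u, |x u - y u| ≤ M) :
    |softMax lam x - softMax lam y| ≤ M := by
  rw [abs_sub_le_iff, sub_le_iff_le_add', sub_le_iff_le_add']
  exact ⟨softMax_le_add hlam fun u => by linarith [abs_le.mp (h u)],
    softMax_le_add hlam fun u => by linarith [abs_le.mp (h u)]⟩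

end softMax

lemma abs_weighted_sum_sub_le {ι : Type*} (s : Finset ι) {p f g : ι → ℝ}
    (hp : ∀ i ∈ s, 0 ≤ p i) (hp1 : ∑ i ∈ s, p i = 1) {M : ℝ} (h : ∀ i ∈ s, |f i - g i| ≤ M) :
    |∑ i ∈ s, p i * f i - ∑ i ∈ s, p i * g i| ≤ M :=
  calc |∑ i ∈ s, p i * f i - ∑ i ∈ s, p i * g i|
      = |∑ i ∈ s, p i * (f i - g i)| := by simp only [mul_sub, sum_sub_distrib]
    _ ≤ ∑ i ∈ s, |p i * (f i - g i)| := abs_sum_le_sum_abs _ _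
    _ ≤ ∑ i ∈ s, p i * M := sum_le_sum fun i hi => by
        rw [abs_mul, abs_of_nonneg (hp i hi)]
        exact mul_le_mul_of_nonneg_left (h i hi) (hp i hi)
    _ = M := by rw [← sum_mul, hp1, one_mul]

theorem soft_bellman_sup_contraction
    (S A : Type*) [Fintype S] [Fintype A] [Nonempty S] [Nonempty A]
    (γ lam : ℝ) (hγ : 0 ≤ γ ∧ γ < 1) (hlam : 0 < lam)
    (R : S × A → ℝ) (P : (S × A) → S → ℝ)
    (hP : ∀ sa, (∀ s', 0 ≤ P sa s') ∧ ∑ s', P sa s' = 1) :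
    ∀ Q Q' : S × A → ℝ,
      (Finset.univ.sup' Finset.univ_nonempty fun sa : S × A =>
        |(R sa + γ * ∑ s', P sa s' * (lam * Real.log (∑ u : A, Real.exp (Q (s', u) / lam))))
          - (R sa + γ * ∑ s', P sa s' * (lam * Real.log (∑ u : A, Real.exp (Q' (s', u) / lam))))|)
        ≤ γ * Finset.univ.sup' Finset.univ_nonempty fun sa : S × A => |Q sa - Q' sa| := by
  intro Q Q'
  refine sup'_le _ _ fun sa _ => ?_
  have hsoft : ∀ s', |softMax lam (fun u => Q (s', u)) - softMax lam (fun u => Q' (s', u))| ≤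
      univ.sup' univ_nonempty fun sa : S × A => |Q sa - Q' sa| := fun s' =>
    abs_softMax_sub_le hlam fun u => le_sup' (fun sa : S × A => |Q sa - Q' sa|) (mem_univ (s', u))
  rw [add_sub_add_left_eq_sub, ← mul_sub, abs_mul, abs_of_nonneg hγ.1]
  exact mul_le_mul_of_nonneg_left
    (abs_weighted_sum_sub_le univ (fun s' _ => (hP sa).1 s') (hP sa).2 fun s' _ => hsoft s') hγ.1
end
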